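/- For any w ∈ ℂ³ with ⟨w,w⟩ < 0 and any x ∈ ℙ²ℂ, the Euclidean distance from x to the projective line w^⊥ = {u ∈ ℙ²ℂ : ⟨u,w⟩ = 0} equals |⟨x,w⟩|/(‖x‖·‖w‖), where distances in ℙ²ℂ are measured by d_E(u,v) = ‖u∧v‖/(‖u‖‖v‖) and the norms come from the standard Hermitian product on ℂ³ and Λ²ℂ³. -/

import Mathlib

/-!
Let `J = diag(1, -1, -1)` and `v = J w`, so that `⟨u, w⟩ = (u, v)` for the standard Hermitian
product and `w^⊥` is the Euclidean orthogonal complement of `v`. Split `x = Qx + Px` along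
`ℂv ⊕ v^⊥`. By Lagrange's identity `‖x ∧ u‖² = ‖x‖²‖u‖² - |(u, x)|²`, and for `u ⊥ v` one has
`(u, x) = (u, Px)`, so `‖x ∧ u‖² = ‖Qx‖²‖u‖² + ‖Px ∧ u‖²`. Hence `d_E(x, u) ≥ ‖Qx‖/‖x‖`, which is
`|(v, x)|/(‖x‖‖v‖)`, with equality for `u = Px` (or any `u ⊥ v` when `Px = 0`).
-/

open scoped ComplexConjugate

/-- Standard Hermitian inner product on ℂ³. -/
noncomputable def cdot (u v : Fin 3 → ℂ) : ℂ := ∑ i, u i * conj (v i)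

/-- Hermitian norm on ℂ³. -/
noncomputable def hnorm (u : Fin 3 → ℂ) : ℝ := Real.sqrt (cdot u u).re

/-- Squared norm of `u ∧ v` in Λ²ℂ³. -/
noncomputable def wedgeSq (u v : Fin 3 → ℂ) : ℝ :=
  (cdot u u * cdot v v - cdot u v * cdot v u).re

/-- `d_E(u,v) = ‖u∧v‖/(‖u‖‖v‖)` on ℙ²ℂ. -/
noncomputable def dE (u v : Fin 3 → ℂ) : ℝ :=
  Real.sqrt (wedgeSq u v) / (hnorm u * hnorm v)

/-- The signature (1,2) Hermitian form. -/
noncomputable def hform (u v : Fin 3 → ℂ) : ℂ :=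
  u 0 * conj (v 0) - u 1 * conj (v 1) - u 2 * conj (v 2)

open scoped InnerProductSpace

section InnerProductSpace

variable {𝕜 E : Type*} [RCLike 𝕜] [NormedAddCommGroup E] [InnerProductSpace 𝕜 E]

theorem norm_starProjection_span_singleton (v x : E) :
    ‖(𝕜 ∙ v).starProjection x‖ = ‖⟪v, x⟫_𝕜‖ / ‖v‖ := by
  rcases eq_or_ne v 0 with rfl | hv
  · simp
  rw [Submodule.starProjection_singleton, norm_smul, norm_div, RCLike.norm_ofReal,
    abs_of_nonneg (by positivity)]
  field_simp [norm_ne_zero_iff.mpr hv]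

theorem Submodule.norm_sq_mul_sub_norm_inner_sq_eq_of_mem_orthogonal (S : Submodule 𝕜 E)
    [S.HasOrthogonalProjection] {u : E} (x : E) (hu : u ∈ Sᗮ) :
    ‖x‖ ^ 2 * ‖u‖ ^ 2 - ‖⟪u, x⟫_𝕜‖ ^ 2 =
      ‖S.starProjection x‖ ^ 2 * ‖u‖ ^ 2 +
        (‖Sᗮ.starProjection x‖ ^ 2 * ‖u‖ ^ 2 - ‖⟪u, Sᗮ.starProjection x⟫_𝕜‖ ^ 2) := by
  rw [← Sᗮ.inner_starProjection_left_eq_right, Sᗮ.starProjection_eq_self_iff.mpr hu,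
    S.norm_sq_eq_add_norm_sq_starProjection x]
  ring

theorem orthogonal_span_singleton_ne_bot [FiniteDimensional 𝕜 E]
    (hE : 1 < Module.finrank 𝕜 E) (v : E) : (𝕜 ∙ v)ᗮ ≠ ⊥ := by
  intro h
  have hsum := Submodule.finrank_add_finrank_orthogonal (𝕜 ∙ v)
  have hline : Module.finrank 𝕜 (𝕜 ∙ v) ≤ 1 := by
    simpa using finrank_span_le_card (R := 𝕜) ({v} : Set E)
  rw [h, finrank_bot] at hsum
  omega

theorem Submodule.exists_ne_zero_norm_inner_eq_mul_norm {K : Submodule 𝕜 E} (hK : K ≠ ⊥)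
    {y : E} (hy : y ∈ K) : ∃ u ∈ K, u ≠ 0 ∧ ‖⟪u, y⟫_𝕜‖ = ‖u‖ * ‖y‖ := by
  rcases eq_or_ne y 0 with rfl | hy0
  · obtain ⟨u, hu, hu0⟩ := Submodule.exists_mem_ne_zero_of_ne_bot hK
    exact ⟨u, hu, hu0, by simp⟩
  · exact ⟨y, hy, hy0, by simp [inner_self_eq_norm_sq_to_K, sq]⟩

theorem isLeast_sqrt_wedge_div_of_inner_eq_zero [FiniteDimensional 𝕜 E]
    (hE : 1 < Module.finrank 𝕜 E) (v x : E) :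
    IsLeast {r : ℝ | ∃ u : E, u ≠ 0 ∧ ⟪v, u⟫_𝕜 = 0 ∧
        r = √(‖x‖ ^ 2 * ‖u‖ ^ 2 - ‖⟪u, x⟫_𝕜‖ ^ 2) / (‖x‖ * ‖u‖)}
      (‖⟪v, x⟫_𝕜‖ / (‖x‖ * ‖v‖)) := by
  have hvalue : ∀ u : E, u ≠ 0 → ‖⟪v, x⟫_𝕜‖ / (‖x‖ * ‖v‖) =
      √(‖(𝕜 ∙ v).starProjection x‖ ^ 2 * ‖u‖ ^ 2) / (‖x‖ * ‖u‖) := by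
    intro u hu
    rw [← mul_pow, Real.sqrt_sq (by positivity), mul_div_mul_right _ _ (norm_ne_zero_iff.mpr hu),
      norm_starProjection_span_singleton, div_div, mul_comm ‖v‖]
  constructor
  · obtain ⟨u, hu, hu0, hcs⟩ := Submodule.exists_ne_zero_norm_inner_eq_mul_norm
      (orthogonal_span_singleton_ne_bot hE v) (Submodule.starProjection_apply_mem _ x)
    refine ⟨u, hu0, Submodule.mem_orthogonal_singleton_iff_inner_right.mp hu, ?_⟩
    rw [(𝕜 ∙ v).norm_sq_mul_sub_norm_inner_sq_eq_of_mem_orthogonal x hu, hcs, hvalue u hu0]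
    ring_nf
  · rintro r ⟨u, hu0, hvu, rfl⟩
    have hu := Submodule.mem_orthogonal_singleton_iff_inner_right.mpr hvu
    rw [(𝕜 ∙ v).norm_sq_mul_sub_norm_inner_sq_eq_of_mem_orthogonal x hu, hvalue u hu0]
    gcongr
    refine le_add_of_nonneg_right (sub_nonneg.mpr ?_)
    rw [mul_comm, ← mul_pow]
    exact pow_le_pow_left₀ (norm_nonneg _) (norm_inner_le_norm u _) 2

end InnerProductSpace

theorem cdot_eq_inner (u v : Fin 3 → ℂ) : cdot u v = ⟪WithLp.toLp 2 v, WithLp.toLp 2 u⟫_ℂ := by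
  simp [cdot, PiLp.inner_apply]

theorem cdot_self_eq (u : Fin 3 → ℂ) : cdot u u = (‖WithLp.toLp 2 u‖ : ℂ) ^ 2 := by
  rw [cdot_eq_inner, inner_self_eq_norm_sq_to_K]
  rfl

theorem hnorm_eq_norm (u : Fin 3 → ℂ) : hnorm u = ‖WithLp.toLp 2 u‖ := by
  rw [hnorm, cdot_self_eq]
  norm_cast
  exact Real.sqrt_sq (norm_nonneg _)

theorem wedgeSq_eq (x u : Fin 3 → ℂ) :
    wedgeSq x u = ‖WithLp.toLp 2 x‖ ^ 2 * ‖WithLp.toLp 2 u‖ ^ 2 -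
      ‖⟪WithLp.toLp 2 u, WithLp.toLp 2 x⟫_ℂ‖ ^ 2 := by
  rw [wedgeSq, cdot_self_eq, cdot_self_eq, cdot_eq_inner x u, cdot_eq_inner u x,
    ← inner_conj_symm (WithLp.toLp 2 x), RCLike.mul_conj]
  norm_cast

theorem dE_eq (x u : Fin 3 → ℂ) :
    dE x u = √(‖WithLp.toLp 2 x‖ ^ 2 * ‖WithLp.toLp 2 u‖ ^ 2 -
      ‖⟪WithLp.toLp 2 u, WithLp.toLp 2 x⟫_ℂ‖ ^ 2) / (‖WithLp.toLp 2 x‖ * ‖WithLp.toLp 2 u‖) := by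
  rw [dE, wedgeSq_eq, hnorm_eq_norm, hnorm_eq_norm]

noncomputable def polarNormal (w : Fin 3 → ℂ) : EuclideanSpace ℂ (Fin 3) := !₂[w 0, -w 1, -w 2]

theorem hform_eq_inner (u w : Fin 3 → ℂ) : hform u w = ⟪polarNormal w, WithLp.toLp 2 u⟫_ℂ := by
  simp [hform, polarNormal, PiLp.inner_apply, Fin.sum_univ_three]
  ring

theorem norm_polarNormal (w : Fin 3 → ℂ) : ‖polarNormal w‖ = hnorm w := by
  simp [hnorm_eq_norm, polarNormal, EuclideanSpace.norm_eq, Fin.sum_univ_three]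

theorem dist_to_polar_line_general (w : Fin 3 → ℂ) (x : Fin 3 → ℂ) :
    sInf {r : ℝ | ∃ u : Fin 3 → ℂ, u ≠ 0 ∧ hform u w = 0 ∧ r = dE x u}
      = ‖hform x w‖ / (hnorm x * hnorm w) := by
  have hdim : 1 < Module.finrank ℂ (EuclideanSpace ℂ (Fin 3)) := by simp
  have hset : {r : ℝ | ∃ u : Fin 3 → ℂ, u ≠ 0 ∧ hform u w = 0 ∧ r = dE x u} =
      {r : ℝ | ∃ u : EuclideanSpace ℂ (Fin 3), u ≠ 0 ∧ ⟪polarNormal w, u⟫_ℂ = 0 ∧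
        r = √(‖WithLp.toLp 2 x‖ ^ 2 * ‖u‖ ^ 2 - ‖⟪u, WithLp.toLp 2 x⟫_ℂ‖ ^ 2) /
          (‖WithLp.toLp 2 x‖ * ‖u‖)} := by
    ext r
    simp only [Set.mem_ofPred_eq, (WithLp.toLp_surjective 2).exists, hform_eq_inner, dE_eq, ne_eq,
      WithLp.toLp_eq_zero]
  rw [hset, (isLeast_sqrt_wedge_div_of_inner_eq_zero hdim _ _).csInf_eq, hform_eq_inner,
    hnorm_eq_norm, norm_polarNormal]

/-- For `w` with `⟨w,w⟩ < 0` and `x ∈ ℙ²ℂ`, the Euclidean distance from `x` to the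
projective line `w^⊥ = {u : ⟨u,w⟩ = 0}` equals `|⟨x,w⟩|/(‖x‖‖w‖)`. -/
theorem dist_to_polar_line (w : Fin 3 → ℂ) (hw : (hform w w).re < 0)
    (x : Fin 3 → ℂ) (hx : x ≠ 0) :
    sInf {r : ℝ | ∃ u : Fin 3 → ℂ, u ≠ 0 ∧ hform u w = 0 ∧ r = dE x u}
      = ‖hform x w‖ / (hnorm x * hnorm w) :=
  dist_to_polar_line_general w x
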